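/- arXiv:1102.0102 — 6 statements merged into one kernel-verified Lean document; each statement's English description precedes it below -/
import Mathlib

section
/- For any continuous based map f : (X, x) → (Y, y), the induced homomorphism f_* : π_n^top(X, x) → π_n^top(Y, y) on topological homotopy groups is continuous; consequently π_n^top is a functor from the homotopy category of pointed topological spaces to the category of topological groups. -/
open scoped unitInterval Topology
open Set Filter

noncomputable instance homotopyGroupTopologicalSpace (N X : Type*) [TopologicalSpace X]
    (x : X) : TopologicalSpace (HomotopyGroup N X x) :=
  instTopologicalSpaceQuotient

/-- Postcomposition with a based continuous map, at the level of based n-loops. -/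
def GenLoop.mapComp {X Y : Type*} [TopologicalSpace X] [TopologicalSpace Y] {x : X} {y : Y}
    (n : ℕ) (f : C(X, Y)) (hf : f x = y) (p : GenLoop (Fin n) X x) : GenLoop (Fin n) Y y :=
  ⟨f.comp p.1, fun t ht => by simp [p.2 t ht, hf]⟩

/-- The homomorphism induced on topological homotopy groups by a based continuous map
is continuous. -/
theorem induced_hom_continuous {X Y : Type*} [TopologicalSpace X] [TopologicalSpace Y]
    {x : X} {y : Y} (n : ℕ) (f : C(X, Y)) (hf : f x = y)
    (F : HomotopyGroup (Fin n) X x → HomotopyGroup (Fin n) Y y)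
    (hF : ∀ p : GenLoop (Fin n) X x, F ⟦p⟧ = ⟦GenLoop.mapComp n f hf p⟧) :
    Continuous F := by
  refine isQuotientMap_quotient_mk'.continuous_iff.mpr ?_
  have h1 : Continuous fun p : GenLoop (Fin n) X x => GenLoop.mapComp n f hf p := by
    apply Continuous.subtype_mk
    exact (ContinuousMap.continuous_postcomp f).comp continuous_subtype_val
  have : (F ∘ Quotient.mk') = fun p : GenLoop (Fin n) X x =>
      (⟦GenLoop.mapComp n f hf p⟧ : HomotopyGroup (Fin n) Y y) := by
    funext p; exact hF p
  erw [this]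
  exact continuous_quotient_mk'.comp h1
end

section
/- If the topological n-th homotopy group π_n^top(X, x) is discrete for every x ∈ X, then X is n-semilocally simply connected: for each x ∈ X there is an open neighborhood U of x such that the inclusion-induced homomorphism π_n(U, x) → π_n(X, x) is trivial. -/
open scoped unitInterval Topology
open Set Filter

/-- If π_n^top(X, x) is discrete for every basepoint, then X is n-semilocally simply
connected: every point has an open neighborhood U such that every n-loop in U based
at that point is nullhomotopic in X. -/
theorem discrete_implies_n_semilocally_simply_connected (X : Type*) [TopologicalSpace X]
    (n : ℕ) (h : ∀ x : X, DiscreteTopology (HomotopyGroup (Fin (n + 1)) X x)) :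
    ∀ x : X, ∃ U : Set X, IsOpen U ∧ x ∈ U ∧
      ∀ p : GenLoop (Fin (n + 1)) X x, (∀ t, p t ∈ U) →
        ⟦p⟧ = (1 : HomotopyGroup (Fin (n + 1)) X x) := by
  intro x
  haveI := h x
  -- the set of nullhomotopic loops is open in the loop space
  have hopen : IsOpen {p : GenLoop (Fin (n + 1)) X x |
      ⟦p⟧ = (1 : HomotopyGroup (Fin (n + 1)) X x)} := by
    have h1 : IsOpen ({(1 : HomotopyGroup (Fin (n + 1)) X x)} : Set _) := isOpen_discrete _
    show IsOpen ((fun p : GenLoop (Fin (n + 1)) X x =>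
      (Quotient.mk' p : HomotopyGroup (Fin (n + 1)) X x)) ⁻¹' {(1 : HomotopyGroup (Fin (n + 1)) X x)})
    exact h1.preimage continuous_quotient_mk'
  -- pass to the ambient space of continuous maps (subtype topology)
  rw [isOpen_induced_iff] at hopen
  obtain ⟨W, hW, hWpre⟩ := hopen
  have hconst : ((GenLoop.const : GenLoop (Fin (n + 1)) X x) : C(I^Fin (n + 1), X)) ∈ W := by
    have hmem : (GenLoop.const : GenLoop (Fin (n + 1)) X x) ∈
        (Subtype.val ⁻¹' W : Set (GenLoop (Fin (n + 1)) X x)) := by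
      rw [hWpre]
      exact (HomotopyGroup.one_def (N := Fin (n + 1)) (x := x)).symm
    exact hmem
  -- use the basis of the compact-open topology given by finite intersections of subbasic sets
  have hbasis := TopologicalSpace.isTopologicalBasis_of_subbasis
    (ContinuousMap.compactOpen_eq (X := I^Fin (n + 1)) (Y := X))
  obtain ⟨B, hBmem, hfB, hBsub⟩ := hbasis.exists_subset_of_mem_open hconst hW
  obtain ⟨T, ⟨hTfin, hTsub⟩, rfl⟩ := hBmem
  classical
  -- for each subbasic set in T, choose its compact/open data
  have hdata : ∀ t ∈ T, ∃ Kt Ut, IsCompact Kt ∧ IsOpen Ut ∧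
      {f : C(I^Fin (n + 1), X) | MapsTo f Kt Ut} = t := by
    intro t ht
    obtain ⟨Kt, hKt, Ut, hUt, ht'⟩ := hTsub ht
    exact ⟨Kt, Ut, hKt, hUt, ht'⟩
  choose! K U hK hU hKU using hdata
  let V : Set C(I^Fin (n + 1), X) → Set X := fun t => if x ∈ U t then U t else univ
  have hVopen : ∀ t ∈ T, IsOpen (V t) := by
    intro t ht
    by_cases hx : x ∈ U t
    · simpa [V, hx] using hU t ht
    · simp [V, hx]
  have hxV : ∀ t ∈ T, x ∈ V t := by
    intro t ht
    by_cases hx : x ∈ U t <;> simp [V, hx]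
  refine ⟨⋂ t ∈ T, V t, hTfin.isOpen_biInter hVopen, mem_biInter hxV, ?_⟩
  intro p hp
  -- p belongs to every subbasic set in T
  have hpT : (p : C(I^Fin (n + 1), X)) ∈ ⋂₀ T := by
    refine mem_sInter.2 fun t ht => ?_
    rw [← hKU t ht]
    intro y hy
    by_cases hx : x ∈ U t
    · have := hp y
      have hyV : (p : C(I^Fin (n + 1), X)) y ∈ V t :=
        mem_iInter₂.1 (hp y) t ht
      simpa [V, hx] using hyV
    · -- then K t must be empty, since the constant loop maps K t into U t
      exfalso
      have hc : ((GenLoop.const : GenLoop (Fin (n + 1)) X x) : C(I^Fin (n + 1), X)) ∈ t :=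
        mem_sInter.1 hfB t ht
      rw [← hKU t ht] at hc
      exact hx (by simpa using hc hy)
  have : p ∈ (Subtype.val ⁻¹' W : Set (GenLoop (Fin (n + 1)) X x)) := hBsub hpT
  rw [hWpre] at this
  exact this
end

section
/- If π_n^top(X, x) is discrete, then there exists an open neighborhood U of x in X such that every continuous n-loop (I^n, ∂I^n) → (U, x) is nullhomotopic in X. -/
open scoped unitInterval Topology
open Set Filter

/-- If π_n^top(X, x) is discrete, then there is an open neighborhood U of x such that
every n-loop in U based at x is nullhomotopic in X. -/
theorem discrete_at_implies_semilocally_at (X : Type*) [TopologicalSpace X] (x : X)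
    (n : ℕ) (h : DiscreteTopology (HomotopyGroup (Fin (n + 1)) X x)) :
    ∃ U : Set X, IsOpen U ∧ x ∈ U ∧
      ∀ p : GenLoop (Fin (n + 1)) X x, (∀ t, p t ∈ U) →
        ⟦p⟧ = (1 : HomotopyGroup (Fin (n + 1)) X x) := by
  classical
  set N := Fin (n + 1)
  -- the singleton {1} is open, so its preimage under the quotient map is open in GenLoop
  have h1 : IsOpen ((fun p : GenLoop N X x => (⟦p⟧ : HomotopyGroup N X x)) ⁻¹'
      {(1 : HomotopyGroup N X x)}) :=
    (@isOpen_discrete (HomotopyGroup N X x) _ h _).preimage continuous_quotient_mk'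
  -- the subtype topology: get an open set V in C(I^N, X)
  rw [isOpen_induced_iff] at h1
  obtain ⟨V, hV, hVeq⟩ := h1
  -- const is in the preimage
  have hconst : ((GenLoop.const : GenLoop N X x) : C(N → I, X)) ∈ V := by
    have : (GenLoop.const : GenLoop N X x) ∈ Subtype.val ⁻¹' V := by
      rw [hVeq]
      exact (HomotopyGroup.one_def (N := N) (X := X) (x := x)).symm
    exact this
  -- use the subbasis of the compact-open topology
  have hbasis := (TopologicalSpace.isTopologicalBasis_of_subbasis
    (ContinuousMap.compactOpen_eq (X := N → I) (Y := X))).exists_subset_of_mem_open hconst hV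
  obtain ⟨b, ⟨F, ⟨hFfin, hFsub⟩, rfl⟩, hcb, hbV⟩ := hbasis
  -- for each s ∈ F, choose K s compact and U s open
  haveI : Finite F := hFfin
  have hchoice : ∀ s : F, ∃ (K : Set (N → I)) (U : Set X), IsCompact K ∧ IsOpen U ∧
      (s : Set C(N → I, X)) = {f : C(N → I, X) | MapsTo (⇑f) K U} := by
    rintro ⟨s, hs⟩
    obtain ⟨K, hK, U, hU, rfl⟩ := hFsub hs
    exact ⟨K, U, hK, hU, rfl⟩
  choose K U hK hU hsEq using hchoice
  -- for each s, the constant map maps K s into U s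
  have hconstMaps : ∀ s : F, MapsTo (fun _ => x) (K s) (U s) := by
    intro s
    have := hcb (s : Set C(N → I, X)) s.2
    rw [hsEq s] at this
    exact this
  -- define W s = U s if x ∈ U s, else univ
  set W : F → Set X := fun s => if x ∈ U s then U s else univ with hW
  have hWopen : ∀ s, IsOpen (W s) := by
    intro s; rw [hW]; dsimp only
    split
    · exact hU s
    · exact isOpen_univ
  have hxW : ∀ s, x ∈ W s := by
    intro s; rw [hW]; dsimp only
    split
    · assumption
    · trivial
  refine ⟨⋂ s : F, W s, isOpen_iInter_of_finite hWopen, mem_iInter.2 hxW, ?_⟩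
  intro p hp
  -- p lands in each W s, hence MapsTo p (K s) (U s) for all s
  have hpF : (p : C(N → I, X)) ∈ ⋂₀ F := by
    rintro s hs
    have : (p : C(N → I, X)) ∈ {f : C(N → I, X) | MapsTo (⇑f) (K ⟨s, hs⟩) (U ⟨s, hs⟩)} := by
      intro y hy
      have hxU : x ∈ U ⟨s, hs⟩ := hconstMaps ⟨s, hs⟩ hy
      have : p y ∈ W ⟨s, hs⟩ := mem_iInter.1 (hp y) ⟨s, hs⟩
      rw [hW] at this; dsimp only at this
      rwa [if_pos hxU] at this
    rwa [← hsEq ⟨s, hs⟩] at this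
  have : p ∈ Subtype.val ⁻¹' V := hbV hpF
  rw [hVeq] at this
  exact this
end

section
/- If X is a connected separable metric space and π_n^top(X, x) is discrete, then π_n(X, x) is countable. -/
open scoped unitInterval Topology
open Set Filter

/-- A based k-loop p is nullhomotopic within U if there is a homotopy rel the cube
boundary from p to the constant loop, taking all its values in U. -/
def GenLoop.NullHomotopicIn {X : Type*} [TopologicalSpace X] {k : ℕ} {y : X}
    (p : GenLoop (Fin k) X y) (U : Set X) : Prop :=
  ∃ H : ContinuousMap.HomotopyRel p.1 (ContinuousMap.const (Fin k → I) y)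
      (Cube.boundary (Fin k)),
    ∀ z, H z ∈ U

/-- X is locally n-connected: every point has arbitrarily small neighborhoods V inside
any neighborhood U such that π_k(V) → π_k(U) is trivial for all 0 ≤ k ≤ n and all
basepoints in V. -/
def LocallyNConnected (n : ℕ) (X : Type*) [TopologicalSpace X] : Prop :=
  ∀ (x : X) (U : Set X), IsOpen U → x ∈ U →
    ∃ V : Set X, IsOpen V ∧ x ∈ V ∧ V ⊆ U ∧
      ∀ k ≤ n, ∀ y ∈ V, ∀ p : GenLoop (Fin k) X y,
        (∀ t, p t ∈ V) → GenLoop.NullHomotopicIn p U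

/-- If X is a connected separable metric space with π_n^top(X, x) discrete, then
π_n(X, x) is countable. -/
theorem discrete_countable (X : Type*) [MetricSpace X] [TopologicalSpace.SeparableSpace X]
    [ConnectedSpace X] (n : ℕ) (x : X)
    (h : DiscreteTopology (HomotopyGroup (Fin n) X x)) :
    Countable (HomotopyGroup (Fin n) X x) := by
  have : SecondCountableTopology X := UniformSpace.secondCountable_of_separable X
  have h2 : TopologicalSpace.SeparableSpace (GenLoop (Fin n) X x) := inferInstance
  have hsep : TopologicalSpace.SeparableSpace (HomotopyGroup (Fin n) X x) := by
    have : DenseRange (Quotient.mk (GenLoop.Homotopic.setoid (Fin n) x)) :=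
      (Quotient.mk'_surjective).denseRange
    exact this.separableSpace continuous_quotient_mk'
  obtain ⟨s, hsc, hsd⟩ := TopologicalSpace.exists_countable_dense (HomotopyGroup (Fin n) X x)
  have : s = Set.univ := by
    have := hsd.closure_eq
    rwa [IsClosed.closure_eq (isClosed_discrete s)] at this
  exact (Set.countable_univ_iff.mp (this ▸ hsc))
end

section
/- For a metric space X, the bijection η : π_n^top(X, x) → π_1^top(Ω^{n−1}(X, x), x̃) induced by the exponential correspondence f ↦ f^# is a homeomorphism, hence an isomorphism of topological groups π_n^top(X, x) ≅ π_1^top(Ω^{n−1}(X, x), x̃). -/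
open scoped unitInterval Topology
open Set Filter

/-- A pointed topological space. -/
structure PointedTopSpace where
  carrier : Type*
  [topInst : TopologicalSpace carrier]
  pt : carrier

attribute [instance] PointedTopSpace.topInst

/-- The based loop space of a pointed space, with the compact-open topology and the
constant loop as basepoint. -/
def PointedTopSpace.loop (P : PointedTopSpace) : PointedTopSpace where
  carrier := {p : C(I, P.carrier) // p 0 = P.pt ∧ p 1 = P.pt}
  pt := ⟨ContinuousMap.const I P.pt, rfl, rfl⟩

/-- The k-fold iterated based loop space. -/
def PointedTopSpace.iterLoop (P : PointedTopSpace) : ℕ → PointedTopSpace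
  | 0 => P
  | k + 1 => (P.iterLoop k).loop

noncomputable section Pi1Aux

open Topology.Homotopy GenLoop

namespace Pi1Aux

variable {X Y Z : Type*} [TopologicalSpace X] [TopologicalSpace Y] [TopologicalSpace Z]

/-- Postcomposition with a pointed homeomorphism as a homeomorphism of generalized
loop spaces. -/
def genLoopCongrRight {N : Type*} (φ : X ≃ₜ Y) {x : X} {y : Y} (h : φ x = y) :
    (Ω^ N X x) ≃ₜ (Ω^ N Y y) where
  toFun p := ⟨(φ : C(X, Y)).comp p.1, fun z hz => by
    simp [ContinuousMap.comp_apply, p.2 z hz, h]⟩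
  invFun q := ⟨(φ.symm : C(Y, X)).comp q.1, fun z hz => by
    simp [ContinuousMap.comp_apply, q.2 z hz, ← h]⟩
  left_inv p := by ext t; simp; exact φ.symm_apply_apply _
  right_inv q := by ext t; simp; exact φ.apply_symm_apply _
  continuous_toFun :=
    ((ContinuousMap.continuous_postcomp _).comp continuous_subtype_val).subtype_mk _
  continuous_invFun :=
    ((ContinuousMap.continuous_postcomp _).comp continuous_subtype_val).subtype_mk _

theorem genLoopCongrRight_apply {N : Type*} (φ : X ≃ₜ Y) {x : X} {y : Y} (h : φ x = y)
    (p : Ω^ N X x) (t : I^N) : genLoopCongrRight φ h p t = φ (p t) := rfl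

theorem genLoopCongrRight_const {N : Type*} (φ : X ≃ₜ Y) {x : X} {y : Y} (h : φ x = y) :
    genLoopCongrRight (N := N) φ h const = const := by
  ext t; simp [genLoopCongrRight_apply, h]

theorem homotopic_congr {N : Type*} (φ : X ≃ₜ Y) {x : X} {y : Y} (h : φ x = y)
    (p q : Ω^ N X x) :
    Homotopic p q ↔ Homotopic (genLoopCongrRight φ h p) (genLoopCongrRight φ h q) := by
  constructor
  · rintro ⟨H⟩
    exact ⟨H.compContinuousMap (φ : C(X, Y))⟩
  · rintro ⟨H⟩
    exact ⟨(H.compContinuousMap (φ.symm : C(Y, X))).cast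
      (by ext t; exact φ.symm_apply_apply _) (by ext t; exact φ.symm_apply_apply _)⟩

theorem continuous_quotient_map {α β : Type*} [TopologicalSpace α] [TopologicalSpace β]
    {s : Setoid α} {t : Setoid β} {f : α → β} (hf : Continuous f)
    (H : ∀ a b, s.r a b → t.r (f a) (f b)) : Continuous (Quotient.map f H) :=
  continuous_coinduced_dom.2 (continuous_quotient_mk'.comp hf)

theorem homotopic_congr_symm {N : Type*} (φ : X ≃ₜ Y) {x : X} {y : Y} (h : φ x = y)
    (p q : Ω^ N Y y) (hpq : Homotopic p q) :
    Homotopic ((genLoopCongrRight φ h).symm p) ((genLoopCongrRight φ h).symm q) := by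
  have h2 := (homotopic_congr φ h ((genLoopCongrRight φ h).symm p)
    ((genLoopCongrRight φ h).symm q)).2
  rw [Homeomorph.apply_symm_apply, Homeomorph.apply_symm_apply] at h2
  exact h2 hpq

/-- Forward map on homotopy groups induced by a pointed homeomorphism. -/
def piMapFun (N : Type*) (φ : X ≃ₜ Y) {x : X} {y : Y} (h : φ x = y) :
    HomotopyGroup N X x → HomotopyGroup N Y y :=
  Quotient.map (genLoopCongrRight φ h) (fun p q hpq => (homotopic_congr φ h p q).1 hpq)

/-- Backward map on homotopy groups induced by a pointed homeomorphism. -/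
def piInvFun (N : Type*) (φ : X ≃ₜ Y) {x : X} {y : Y} (h : φ x = y) :
    HomotopyGroup N Y y → HomotopyGroup N X x :=
  Quotient.map (genLoopCongrRight φ h).symm (homotopic_congr_symm φ h)

theorem piMapFun_mk {N : Type*} (φ : X ≃ₜ Y) {x : X} {y : Y} (h : φ x = y) (p : Ω^ N X x) :
    piMapFun N φ h ⟦p⟧ = (⟦genLoopCongrRight φ h p⟧ : HomotopyGroup N Y y) := rfl

theorem piMapFun_mul {N : Type*} [DecidableEq N] [Nonempty N] (φ : X ≃ₜ Y) {x : X} {y : Y}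
    (h : φ x = y) (a b : HomotopyGroup N X x) :
    piMapFun N φ h (a * b) = piMapFun N φ h a * piMapFun N φ h b := by
  induction a using Quotient.ind
  induction b using Quotient.ind
  rename_i p q
  have i : N := Classical.arbitrary N
  simp only [piMapFun_mk]
  simp only [HomotopyGroup.mul_spec (i := i)]
  rw [piMapFun_mk]
  refine congrArg _ ?_
  ext t
  show φ (transAt i q p t)
      = transAt i (genLoopCongrRight φ h q) (genLoopCongrRight φ h p) t
  simp only [transAt, coe_copy]
  split_ifs <;> rfl

/-- Transport of homotopy groups along a pointed homeomorphism. -/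
def piCongr (N : Type*) [DecidableEq N] [Nonempty N] (φ : X ≃ₜ Y) {x : X} {y : Y}
    (h : φ x = y) : HomotopyGroup N X x ≃* HomotopyGroup N Y y where
  toFun := piMapFun N φ h
  invFun := piInvFun N φ h
  left_inv := by
    refine Quotient.ind fun p => ?_
    rw [piMapFun, piInvFun, Quotient.map_mk, Quotient.map_mk]
    exact congrArg _ ((genLoopCongrRight φ h).left_inv p)
  right_inv := by
    refine Quotient.ind fun p => ?_
    rw [piMapFun, piInvFun, Quotient.map_mk, Quotient.map_mk]
    exact congrArg _ ((genLoopCongrRight φ h).right_inv p)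
  map_mul' := piMapFun_mul φ h

theorem continuous_piCongr (N : Type*) [DecidableEq N] [Nonempty N] (φ : X ≃ₜ Y)
    {x : X} {y : Y} (h : φ x = y) : Continuous (piCongr N φ h) := by
  show Continuous (piMapFun N φ h)
  exact continuous_quotient_map (genLoopCongrRight φ h).continuous _

theorem continuous_piCongr_symm (N : Type*) [DecidableEq N] [Nonempty N] (φ : X ≃ₜ Y)
    {x : X} {y : Y} (h : φ x = y) : Continuous (piCongr N φ h).symm := by
  show Continuous (piInvFun N φ h)
  exact continuous_quotient_map (genLoopCongrRight φ h).symm.continuous _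

/-- `genLoopEquivOfUnique` as a homeomorphism. -/
def genLoopHomeoOfUnique (N : Type*) [Unique N] {z : Z} : (Ω^ N Z z) ≃ₜ Path z z where
  toEquiv := genLoopEquivOfUnique N
  continuous_toFun := by
    refine continuous_induced_rng.2 ?_
    exact (ContinuousMap.continuous_precomp
      (⟨fun t _ => t, by fun_prop⟩ : C(I, I^N))).comp continuous_subtype_val
  continuous_invFun := by
    have h1 : Continuous fun p : Path z z =>
        p.toContinuousMap.comp (⟨fun c => c default, continuous_apply _⟩ : C(I^N, I)) :=
      (ContinuousMap.continuous_precomp _).comp continuous_induced_dom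
    exact h1.subtype_mk _

theorem homotopic_iff_pathHomotopic {N : Type*} [Unique N] {z : Z} (a₁ a₂ : Ω^ N Z z) :
    Homotopic a₁ a₂ ↔
      (genLoopEquivOfUnique N a₁).Homotopic (genLoopEquivOfUnique N a₂) := by
  constructor <;> rintro ⟨H⟩
  · exact
      ⟨{  toFun := fun tx => H (tx.fst, fun _ => tx.snd)
          map_zero_left := fun _ => H.apply_zero _
          map_one_left := fun _ => H.apply_one _
          prop' := fun t y iH => H.prop' _ _ ⟨default, iH⟩ }⟩
  refine
    ⟨⟨⟨⟨fun tx => H (tx.fst, tx.snd default), H.continuous.comp ?_⟩, fun y => ?_, fun y => ?_⟩,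
      ?_⟩⟩
  · exact continuous_fst.prodMk ((continuous_apply _).comp continuous_snd)
  · exact (H.apply_zero _).trans (congr_arg a₁ (eq_const_of_unique y).symm)
  · exact (H.apply_one _).trans (congr_arg a₂ (eq_const_of_unique y).symm)
  · rintro t y ⟨i, iH⟩
    cases Unique.eq_default i
    exact (H.eq_fst _ iH).trans (congr_arg a₁ (eq_const_of_unique y).symm)

theorem genLoopEquivOfUnique_symm_trans {z : Z} (P Q : Path z z) (j : Fin 1) :
    (genLoopEquivOfUnique (Fin 1)).symm (P.trans Q) =
      transAt j ((genLoopEquivOfUnique (Fin 1)).symm P)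
        ((genLoopEquivOfUnique (Fin 1)).symm Q) := by
  obtain rfl : j = default := Subsingleton.elim _ _
  ext t
  show (P.trans Q) (t default) = transAt default _ _ t
  simp only [transAt, coe_copy]
  rw [Path.trans_apply]
  split_ifs with h₁
  · show _ = P (Function.update t default _ default)
    rw [Function.update_self]
    exact congrArg P (Set.projIcc_of_mem _ _).symm
  · show _ = Q (Function.update t default _ default)
    rw [Function.update_self]
    exact congrArg Q (Set.projIcc_of_mem _ _).symm

section PiSucc

variable {N : Type*} [DecidableEq N] {x : X}

/-- Currying a generalized loop into a one-dimensional generalized loop valued in a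
generalized loop space. -/
def toPiOneFun (i : N) : (Ω^ N X x) → Ω^ (Fin 1) (Ω^ {j // j ≠ i} X x) const :=
  fun p => (genLoopEquivOfUnique (Fin 1)).symm (toLoop i p)

/-- Inverse of `toPiOneFun`. -/
def fromPiOneFun (i : N) : Ω^ (Fin 1) (Ω^ {j // j ≠ i} X x) const → Ω^ N X x :=
  fun q => fromLoop i (genLoopEquivOfUnique (Fin 1) q)

theorem to_fromPiOne (i : N) (p : Ω^ (Fin 1) (Ω^ {j // j ≠ i} X x) const) :
    toPiOneFun i (fromPiOneFun i p) = p := by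
  rw [toPiOneFun, fromPiOneFun, to_from, Equiv.symm_apply_apply]

theorem from_toPiOne (i : N) (p : Ω^ N X x) : fromPiOneFun i (toPiOneFun i p) = p := by
  rw [fromPiOneFun, toPiOneFun, Equiv.apply_symm_apply]
  exact (loopHomeo i).toEquiv.left_inv p

theorem toPiOneFun_homotopic_iff (i : N) (p q : Ω^ N X x) :
    Homotopic p q ↔ Homotopic (toPiOneFun i p) (toPiOneFun i q) := by
  refine Iff.trans ⟨homotopicTo i, homotopicFrom i⟩ (Iff.symm ?_)
  refine Iff.trans (homotopic_iff_pathHomotopic _ _) ?_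
  rw [toPiOneFun, toPiOneFun, Equiv.apply_symm_apply, Equiv.apply_symm_apply]

theorem fromPiOneFun_homotopic (i : N) (p q : Ω^ (Fin 1) (Ω^ {j // j ≠ i} X x) const)
    (hpq : Homotopic p q) : Homotopic (fromPiOneFun i p) (fromPiOneFun i q) := by
  have h2 := (toPiOneFun_homotopic_iff i (fromPiOneFun i p) (fromPiOneFun i q)).2
  rw [to_fromPiOne, to_fromPiOne] at h2
  exact h2 hpq

/-- The forward map on homotopy groups. -/
def piSuccFun (i : N) : HomotopyGroup N X x → HomotopyGroup (Fin 1) (Ω^ {j // j ≠ i} X x) const :=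
  Quotient.map (toPiOneFun i) (fun p q h => (toPiOneFun_homotopic_iff i p q).1 h)

/-- The backward map on homotopy groups. -/
def piSuccInvFun (i : N) :
    HomotopyGroup (Fin 1) (Ω^ {j // j ≠ i} X x) const → HomotopyGroup N X x :=
  Quotient.map (fromPiOneFun i) (fromPiOneFun_homotopic i)

theorem piSuccFun_mk (i : N) (p : Ω^ N X x) :
    piSuccFun i ⟦p⟧ = (⟦toPiOneFun i p⟧ : HomotopyGroup (Fin 1) (Ω^ {j // j ≠ i} X x) const) :=
  rfl

theorem toPiOneFun_transAt (i : N) (p q : Ω^ N X x) :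
    toPiOneFun i (transAt i q p) =
      transAt (default : Fin 1) (toPiOneFun i q) (toPiOneFun i p) := by
  rw [toPiOneFun, ← fromLoop_trans_toLoop, to_from, genLoopEquivOfUnique_symm_trans]
  rfl

theorem piSuccFun_mul [Nonempty N] (i : N) (a b : HomotopyGroup N X x) :
    piSuccFun i (a * b) = piSuccFun i a * piSuccFun i b := by
  induction a using Quotient.ind
  induction b using Quotient.ind
  rename_i p q
  simp only [piSuccFun_mk]
  simp only [HomotopyGroup.mul_spec (i := i), HomotopyGroup.mul_spec (i := (default : Fin 1))]
  rw [piSuccFun_mk]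
  exact congrArg _ (toPiOneFun_transAt i p q)

/-- The homotopy group `π_N` is isomorphic to `π_1` of the corresponding generalized
loop space. -/
def piSuccEquivPiOne [Nonempty N] (i : N) :
    HomotopyGroup N X x ≃* HomotopyGroup (Fin 1) (Ω^ {j // j ≠ i} X x) const where
  toFun := piSuccFun i
  invFun := piSuccInvFun i
  left_inv := by
    refine Quotient.ind fun p => ?_
    rw [piSuccFun, piSuccInvFun, Quotient.map_mk, Quotient.map_mk]
    exact congrArg _ (from_toPiOne i p)
  right_inv := by
    refine Quotient.ind fun p => ?_
    rw [piSuccFun, piSuccInvFun, Quotient.map_mk, Quotient.map_mk]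
    exact congrArg _ (to_fromPiOne i p)
  map_mul' := piSuccFun_mul i

theorem continuous_piSuccEquivPiOne [Nonempty N] (i : N) :
    Continuous (piSuccEquivPiOne (x := x) i) := by
  show Continuous (piSuccFun i)
  refine continuous_quotient_map ?_ _
  exact (genLoopHomeoOfUnique (Fin 1)).symm.continuous.comp (continuous_toLoop i)

theorem continuous_piSuccEquivPiOne_symm [Nonempty N] (i : N) :
    Continuous (piSuccEquivPiOne (x := x) i).symm := by
  show Continuous (piSuccInvFun i)
  refine continuous_quotient_map ?_ _
  exact (continuous_fromLoop i).comp (genLoopHomeoOfUnique (Fin 1)).continuous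

end PiSucc

/-- Transport of path spaces along a pointed homeomorphism. -/
def pathCongr (φ : X ≃ₜ Y) {a : X} {b : Y} (h : φ a = b) : Path a a ≃ₜ Path b b where
  toFun p := (p.map φ.continuous).cast h.symm h.symm
  invFun q := (q.map φ.symm.continuous).cast
    (by rw [← h, Homeomorph.symm_apply_apply]) (by rw [← h, Homeomorph.symm_apply_apply])
  left_inv p := by ext t; exact φ.symm_apply_apply _
  right_inv q := by ext t; exact φ.apply_symm_apply _
  continuous_toFun := by
    refine continuous_induced_rng.2 ?_
    exact (ContinuousMap.continuous_postcomp (φ : C(X, Y))).comp continuous_induced_dom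
  continuous_invFun := by
    refine continuous_induced_rng.2 ?_
    exact (ContinuousMap.continuous_postcomp (φ.symm : C(Y, X))).comp continuous_induced_dom

theorem pathCongr_refl (φ : X ≃ₜ Y) {a : X} {b : Y} (h : φ a = b) :
    pathCongr φ h (Path.refl a) = Path.refl b := by
  ext t; exact h

/-- A path space as a subtype of continuous maps. -/
def pathToSubtype (a : X) : Path a a ≃ₜ {p : C(I, X) // p 0 = a ∧ p 1 = a} where
  toFun p := ⟨p.toContinuousMap, p.source, p.target⟩
  invFun q := { toContinuousMap := q.1, source' := q.2.1, target' := q.2.2 }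
  left_inv p := rfl
  right_inv q := rfl
  continuous_toFun := continuous_induced_dom.subtype_mk _
  continuous_invFun := continuous_induced_rng.2 continuous_subtype_val

/-- Reindexing of generalized loop spaces along an equivalence of index types. -/
def genLoopIndexCongr {M M' : Type*} (e : M ≃ M') {x : X} : (Ω^ M X x) ≃ₜ (Ω^ M' X x) where
  toFun p := ⟨p.1.comp ⟨fun c j => c (e j), by fun_prop⟩, fun c hc => by
    obtain ⟨i', hi'⟩ := hc
    exact p.2 _ ⟨e.symm i', by simpa using hi'⟩⟩
  invFun p := ⟨p.1.comp ⟨fun c j => c (e.symm j), by fun_prop⟩, fun c hc => by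
    obtain ⟨i', hi'⟩ := hc
    exact p.2 _ ⟨e i', by simpa using hi'⟩⟩
  left_inv p := by ext t; show p.1 _ = _; exact congrArg p.1 (by ext j; simp)
  right_inv p := by ext t; show p.1 _ = _; exact congrArg p.1 (by ext j; simp)
  continuous_toFun :=
    ((ContinuousMap.continuous_precomp
      (⟨fun c j => c (e j), by fun_prop⟩ : C(I^M', I^M))).comp
        continuous_subtype_val).subtype_mk _
  continuous_invFun :=
    ((ContinuousMap.continuous_precomp
      (⟨fun c j => c (e.symm j), by fun_prop⟩ : C(I^M, I^M'))).comp
        continuous_subtype_val).subtype_mk _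

theorem genLoopIndexCongr_const {M M' : Type*} (e : M ≃ M') {x : X} :
    genLoopIndexCongr (X := X) e (const (x := x)) = const := rfl

theorem toLoop_const {N : Type*} [DecidableEq N] (i : N) {x : X} :
    toLoop i (const : Ω^ N X x) = Path.refl const := by
  ext t z
  rfl

end Pi1Aux

namespace Pi1Aux

/-- The iterated homeomorphism `Ω^{Fin n}(X, x) ≃ₜ Ω^n(X, x)`, pointed. -/
def iterHomeoP (X : Type*) [TopologicalSpace X] (x : X) :
    (n : ℕ) → { φ : (Ω^ (Fin n) X x) ≃ₜ (PointedTopSpace.iterLoop (.mk X x) n).carrier //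
      φ const = (PointedTopSpace.iterLoop (.mk X x) n).pt }
  | 0 => ⟨genLoopHomeoOfIsEmpty (Fin 0) x, rfl⟩
  | n + 1 => by
    obtain ⟨ψ, hψ⟩ := iterHomeoP X x n
    let eIdx : (Ω^ {j // j ≠ (0 : Fin (n + 1))} X x) ≃ₜ (Ω^ (Fin n) X x) :=
      (genLoopIndexCongr (finSuccAboveEquiv (0 : Fin (n + 1)))).symm
    let φ := eIdx.trans ψ
    have hφ : φ const = (PointedTopSpace.iterLoop (.mk X x) n).pt := by
      show ψ (eIdx const) = _
      have h0 : eIdx const = const := rfl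
      rw [h0, hψ]
    refine ⟨(loopHomeo (0 : Fin (n + 1))).trans ((pathCongr φ hφ).trans
      (pathToSubtype (PointedTopSpace.iterLoop (.mk X x) n).pt)), ?_⟩
    show pathToSubtype _ (pathCongr φ hφ (toLoop 0 const)) = _
    rw [toLoop_const, pathCongr_refl]
    rfl

end Pi1Aux

end Pi1Aux

open Topology.Homotopy GenLoop in
/-- For a metric space X, π_{n+1}^top(X, x) is isomorphic as a topological group to
π_1^top of the n-fold based loop space Ω^n(X, x) at the constant loop. -/
theorem homotopyGroup_iso_pi1_of_loopSpace (X : Type*) [MetricSpace X] (x : X) (n : ℕ) :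
    ∃ e : HomotopyGroup (Fin (n + 1)) X x ≃*
        HomotopyGroup (Fin (0 + 1)) (PointedTopSpace.iterLoop (.mk X x) n).carrier
          (PointedTopSpace.iterLoop (.mk X x) n).pt,
      Continuous e ∧ Continuous e.symm := by
  classical
  obtain ⟨ψ, hψ⟩ := Pi1Aux.iterHomeoP X x n
  let eIdx : (Ω^ {j // j ≠ (0 : Fin (n + 1))} X x) ≃ₜ (Ω^ (Fin n) X x) :=
    (Pi1Aux.genLoopIndexCongr (finSuccAboveEquiv (0 : Fin (n + 1)))).symm
  have hφ : (eIdx.trans ψ) const = (PointedTopSpace.iterLoop (.mk X x) n).pt := hψ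
  refine ⟨(Pi1Aux.piSuccEquivPiOne (0 : Fin (n + 1))).trans
    (Pi1Aux.piCongr (Fin 1) (eIdx.trans ψ) hφ), ?_, ?_⟩
  · exact (Pi1Aux.continuous_piCongr _ _ _).comp
      (Pi1Aux.continuous_piSuccEquivPiOne _)
  · exact (Pi1Aux.continuous_piSuccEquivPiOne_symm _).comp
      (Pi1Aux.continuous_piCongr_symm _ _ _)
end

section
/- If the (n−1)-fold based loop space Ω^{n−1}(X, x) is path connected, locally path connected, and semilocally simply connected, then π_n^top(X, x) is discrete. -/
open scoped unitInterval Topology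
open Set Filter Topology.Homotopy

/-- A space is semilocally simply connected if every point has a neighborhood U such
that every loop at that point contained in U is homotopic (rel endpoints) to the
constant loop. -/
def SemilocallySimplyConnectedSpace (Y : Type*) [TopologicalSpace Y] : Prop :=
  ∀ y : Y, ∃ U ∈ 𝓝 y, ∀ p : Path y y, (∀ t, p t ∈ U) → p.Homotopic (Path.refl y)

namespace SLSCAux

variable {Y : Type*} [TopologicalSpace Y]

lemma htrans_refl {a b : Y} (e : Path a b) : (e.trans (Path.refl b)).Homotopic e :=
  ⟨Path.Homotopy.transRefl e⟩

lemma hrefl_trans {a b : Y} (e : Path a b) : ((Path.refl a).trans e).Homotopic e :=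
  ⟨Path.Homotopy.reflTrans e⟩

lemma hassoc {a b c d : Y} (e : Path a b) (f : Path b c) (g : Path c d) :
    ((e.trans f).trans g).Homotopic (e.trans (f.trans g)) :=
  ⟨Path.Homotopy.transAssoc e f g⟩

lemma htrans_symm {a b : Y} (e : Path a b) : (e.trans e.symm).Homotopic (Path.refl a) :=
  (Path.Homotopic.symm ⟨Path.Homotopy.reflTransSymm e⟩)

lemma hsymm_trans {a b : Y} (e : Path a b) : (e.symm.trans e).Homotopic (Path.refl b) :=
  (Path.Homotopic.symm ⟨Path.Homotopy.reflSymmTrans e⟩)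

/-- cancel: if `e⁻¹ ⬝ f` is nullhomotopic then `f` is homotopic to `e`. -/
lemma homotopic_of_symm_trans {a b : Y} {e f : Path a b}
    (h : (e.symm.trans f).Homotopic (Path.refl b)) : f.Homotopic e := by
  have h1 : f.Homotopic (e.trans (e.symm.trans f)) := by
    refine (hrefl_trans f).symm.trans ?_
    refine (Path.Homotopic.hcomp (htrans_symm e).symm (Path.Homotopic.refl f)).trans ?_
    exact hassoc _ _ _
  exact h1.trans (((Path.Homotopic.hcomp (Path.Homotopic.refl e) h)).trans (htrans_refl e))

lemma homotopic_cast {a b a' b' : Y} {e f : Path a b} (h : e.Homotopic f) (ha : a' = a)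
    (hb : b' = b) : (e.cast ha hb).Homotopic (f.cast ha hb) := by
  subst ha; subst hb
  have h1 : e.cast rfl rfl = e := by ext s; rfl
  have h2 : f.cast rfl rfl = f := by ext s; rfl
  rwa [h1, h2]

/-- A "good" set: open, path-connected, and all loops inside it (at any basepoint) are
nullhomotopic in the ambient space. -/
def IsGood (W : Set Y) : Prop :=
  IsOpen W ∧ IsPathConnected W ∧
    ∀ (u : Y) (L : Path u u), (∀ s, L s ∈ W) → L.Homotopic (Path.refl u)

lemma exists_good [LocallyPathConnectedSpace Y] (hS : SemilocallySimplyConnectedSpace Y)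
    (z : Y) {S : Set Y} (hs : S ∈ 𝓝 z) : ∃ W, z ∈ W ∧ W ⊆ S ∧ IsGood W := by
  obtain ⟨U, hU, hloop⟩ := hS z
  obtain ⟨W, ⟨hWo, hzW, hWpc⟩, hWsub⟩ :=
    (isOpen_isPathConnected_basis z).mem_iff.mp (inter_mem hU hs)
  refine ⟨W, hzW, fun w hw => (hWsub hw).2, hWo, hWpc, ?_⟩
  intro u L hL
  have huW : u ∈ W := L.source ▸ hL 0
  obtain ⟨β, hβ⟩ := hWpc.joinedIn z hzW u huW
  set M : Path z z := β.trans (L.trans β.symm) with hM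
  have hMrange : ∀ s, M s ∈ U := by
    have : range M ⊆ W := by
      rw [hM, Path.trans_range, Path.trans_range, Path.symm_range]
      refine union_subset (range_subset_iff.2 hβ) (union_subset (range_subset_iff.2 hL)
        (range_subset_iff.2 hβ))
    exact fun s => (hWsub (this (mem_range_self s))).1
  have hMnull : M.Homotopic (Path.refl z) := hloop M hMrange
  -- now deduce `L ≃ refl u`
  have key1 : (β.symm.trans (M.trans β)).Homotopic L := by
    have h2 : (M.trans β).Homotopic (β.trans L) := by
      rw [hM]
      refine (hassoc β (L.trans β.symm) β).trans ?_
      refine (Path.Homotopic.hcomp (Path.Homotopic.refl β) ?_)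
      refine (hassoc L β.symm β).trans ?_
      refine (Path.Homotopic.hcomp (Path.Homotopic.refl L) (hsymm_trans β)).trans ?_
      exact htrans_refl L
    refine (Path.Homotopic.hcomp (Path.Homotopic.refl β.symm) h2).trans ?_
    refine ((hassoc β.symm β L).symm).trans ?_
    exact (Path.Homotopic.hcomp (hsymm_trans β) (Path.Homotopic.refl L)).trans (hrefl_trans L)
  have key2 : (β.symm.trans (M.trans β)).Homotopic (Path.refl u) := by
    refine (Path.Homotopic.hcomp (Path.Homotopic.refl β.symm)
      ((Path.Homotopic.hcomp hMnull (Path.Homotopic.refl β)).trans (hrefl_trans β))).trans ?_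
    exact hsymm_trans β
  exact key1.symm.trans key2


variable {Y : Type*} [TopologicalSpace Y] {y : Y}

/-- The part of the loop `r` between times `u` and `v`. -/
noncomputable def seg (r : Path y y) (u v : I) (h : u ≤ v) : Path (r u) (r v) :=
  (r.truncateOfLE (Subtype.coe_le_coe.2 h : (u : ℝ) ≤ (v : ℝ))).cast
    (r.extend_extends' u).symm (r.extend_extends' v).symm

lemma seg_apply (r : Path y y) (u v : I) (h : u ≤ v) (s : I) :
    seg r u v h s = r.extend (min (max (s : ℝ) (u : ℝ)) (v : ℝ)) := rfl

lemma seg_mem (r : Path y y) (u v : I) (h : u ≤ v) {A : Set Y}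
    (hA : ∀ w : I, u ≤ w → w ≤ v → r w ∈ A) (s : I) : seg r u v h s ∈ A := by
  rw [seg_apply]
  set w : ℝ := min (max (s : ℝ) (u : ℝ)) (v : ℝ) with hw
  have hu' : (u : ℝ) ≤ w := le_min (le_max_right _ _) (Subtype.coe_le_coe.2 h)
  have hv' : w ≤ (v : ℝ) := min_le_right _ _
  have hwI : w ∈ I := ⟨u.2.1.trans hu', hv'.trans v.2.2⟩
  have : r.extend w = r ⟨w, hwI⟩ := r.extend_apply hwI
  rw [this]
  exact hA ⟨w, hwI⟩ (Subtype.coe_le_coe.1 (by exact hu')) (Subtype.coe_le_coe.1 (by exact hv'))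

lemma zero_le' (v : I) : (0 : I) ≤ v := Subtype.coe_le_coe.1 (by simpa using v.2.1)
lemma le_one' (v : I) : v ≤ (1 : I) := Subtype.coe_le_coe.1 (by simpa using v.2.2)

/-- The part of the loop `r` from time `0` to time `v`, as a path starting at `y`. -/
noncomputable def segY (r : Path y y) (v : I) : Path y (r v) :=
  (seg r 0 v (zero_le' v)).cast r.source.symm rfl

lemma segY_apply (r : Path y y) (v : I) (s : I) :
    segY r v s = r.extend (min (max (s : ℝ) ((0 : I) : ℝ)) (v : ℝ)) := rfl

lemma segY_mem (r : Path y y) (v : I) {A : Set Y}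
    (hA : ∀ w : I, w ≤ v → r w ∈ A) (s : I) : segY r v s ∈ A := by
  have : segY r v s = seg r 0 v (zero_le' v) s := rfl
  rw [this]
  exact seg_mem r 0 v _ (fun w _ hw => hA w hw) s

/-- the reparametrisation used to split a path at time `v`. -/
noncomputable def halfway (v : I) (s : I) : I :=
  ⟨if (s : ℝ) ≤ 1 / 2 then min (2 * s) v else max (2 * s - 1) v, by
    constructor
    · split_ifs
      · exact le_min (mul_nonneg (by norm_num) s.2.1) v.2.1
      · exact v.2.1.trans (le_max_right _ _)
    · split_ifs with hs
      · exact (min_le_right _ _).trans v.2.2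
      · exact max_le (by linarith [s.2.2]) v.2.2⟩

lemma continuous_halfway (v : I) : Continuous (halfway v) := by
  apply Continuous.subtype_mk
  apply Continuous.if_le
  · fun_prop
  · fun_prop
  · exact continuous_subtype_val
  · exact continuous_const
  · intro s hs
    norm_num [hs]
    rw [min_eq_right v.2.2, max_eq_right v.2.1]

lemma halfway_coe_le {v s : I} (hs : (s : ℝ) ≤ 1 / 2) :
    ((halfway v s : I) : ℝ) = min (2 * (s : ℝ)) (v : ℝ) := by
  change (if (s : ℝ) ≤ 1 / 2 then min (2 * (s:ℝ)) (v:ℝ) else max (2 * (s:ℝ) - 1) (v:ℝ)) = _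
  rw [if_pos hs]

lemma halfway_coe_gt {v s : I} (hs : ¬ (s : ℝ) ≤ 1 / 2) :
    ((halfway v s : I) : ℝ) = max (2 * (s : ℝ) - 1) (v : ℝ) := by
  change (if (s : ℝ) ≤ 1 / 2 then min (2 * (s:ℝ)) (v:ℝ) else max (2 * (s:ℝ) - 1) (v:ℝ)) = _
  rw [if_neg hs]

lemma halfway_zero (v : I) : halfway v 0 = 0 := by
  apply Subtype.ext
  rw [show ((halfway v 0 : I) : ℝ) = min (2 * ((0:I) : ℝ)) (v : ℝ) from halfway_coe_le (by norm_num)]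
  have h0 : ((0:I) : ℝ) = 0 := rfl
  rw [h0, mul_zero, min_eq_left v.2.1]

lemma halfway_one (v : I) : halfway v 1 = 1 := by
  apply Subtype.ext
  rw [show ((halfway v 1 : I) : ℝ) = max (2 * ((1:I) : ℝ) - 1) (v : ℝ) from
    halfway_coe_gt (by norm_num)]
  have h1 : ((1:I) : ℝ) = 1 := rfl
  rw [h1]
  norm_num
  exact v.2.2

lemma segY_trans (r : Path y y) {v w : I} (h : v ≤ w) :
    ((segY r v).trans (seg r v w h)).Homotopic (segY r w) := by
  have heq : (segY r v).trans (seg r v w h) =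
      (segY r w).reparam (halfway v) (continuous_halfway v) (halfway_zero v) (halfway_one v) := by
    ext s
    rw [Path.trans_apply]
    simp only [Path.coe_reparam, Function.comp_apply]
    rw [segY_apply]
    have h0 : ((0 : I) : ℝ) = 0 := rfl
    split_ifs with hs
    · rw [segY_apply, halfway_coe_le hs, h0]
      congr 1
      have h2s : (0:ℝ) ≤ 2 * (s:ℝ) := mul_nonneg (by norm_num) s.2.1
      have hmm : (0:ℝ) ≤ min (2 * (s:ℝ)) (v:ℝ) := le_min h2s v.2.1
      rw [max_eq_left h2s, max_eq_left hmm,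
        min_eq_left ((min_le_right _ _).trans (Subtype.coe_le_coe.2 h))]
    · rw [seg_apply, halfway_coe_gt hs, h0]
      congr 1
      rw [max_eq_left (v.2.1.trans (le_max_right _ _))]
  rw [heq]
  exact (Path.Homotopic.symm ⟨Path.Homotopy.reparam _ _ _ _ _⟩)

lemma segY_one (r : Path y y) : segY r 1 = r.cast rfl r.target := by
  ext s
  rw [segY_apply]
  have h0 : ((0 : I) : ℝ) = 0 := rfl
  have h1 : ((1 : I) : ℝ) = 1 := rfl
  rw [h0, h1, max_eq_left s.2.1, min_eq_left s.2.2]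
  have : r.extend (s : ℝ) = r s := r.extend_extends' s
  rw [this]
  rfl


lemma trans_mem {a b c : Y} {e : Path a b} {f : Path b c} {A : Set Y}
    (he : ∀ s, e s ∈ A) (hf : ∀ s, f s ∈ A) (s : I) : (e.trans f) s ∈ A := by
  have h : (e.trans f) s ∈ range (e.trans f) := mem_range_self s
  rw [Path.trans_range] at h
  rcases h with h | h
  · obtain ⟨u, hu⟩ := h; exact hu ▸ he u
  · obtain ⟨u, hu⟩ := h; exact hu ▸ hf u

lemma cast_mem {a b a' b' : Y} {e : Path a b} (ha : a' = a) (hb : b' = b) {A : Set Y}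
    (he : ∀ s, e s ∈ A) (s : I) : (e.cast ha hb) s ∈ A := he s

lemma symm_mem {a b : Y} {e : Path a b} {A : Set Y}
    (he : ∀ s, e s ∈ A) (s : I) : e.symm s ∈ A := by
  have h : e.symm s ∈ range e.symm := mem_range_self s
  rw [Path.symm_range] at h
  obtain ⟨u, hu⟩ := h; exact hu ▸ he u

lemma mem_nhds_homotopic [LocallyPathConnectedSpace Y] (hS : SemilocallySimplyConnectedSpace Y)
    (y : Y) (p : Path y y) : {q : Path y y | q.Homotopic p} ∈ 𝓝 p := by
  classical
  -- choose good sets around each point of the loop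
  choose A' hA'mem _ hA'good using fun s : I => exists_good hS (p s) (univ_mem : univ ∈ 𝓝 (p s))
  obtain ⟨t, ht0, htmono, ⟨m₀, htop⟩, hsub⟩ :=
    exists_monotone_Icc_subset_open_cover_unitInterval
      (c := fun s : I => p ⁻¹' A' s)
      (fun s => (hA'good s).1.preimage p.continuous)
      (fun s _ => mem_iUnion.2 ⟨s, hA'mem s⟩)
  choose sel hsel using hsub
  set A : ℕ → Set Y := fun k => A' (sel k) with hA
  have hAgood : ∀ k, IsGood (A k) := fun k => hA'good _
  have hle : ∀ k, t k ≤ t (k + 1) := fun k => htmono (Nat.le_succ k)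
  have hpA : ∀ k, ∀ s ∈ Icc (t k) (t (k + 1)), p s ∈ A k := fun k s hs => hsel k hs
  -- the small good sets around the subdivision points
  have hNnhds : ∀ k, (match k with | 0 => A 0 | (j+1) => A j ∩ A (j+1)) ∈ 𝓝 (p (t k)) := by
    intro k
    match k with
    | 0 => exact ((hAgood 0).1).mem_nhds (hpA 0 (t 0) ⟨le_rfl, hle 0⟩)
    | (j+1) =>
      exact inter_mem (((hAgood j).1).mem_nhds (hpA j _ ⟨hle j, le_rfl⟩))
        (((hAgood (j+1)).1).mem_nhds (hpA (j+1) _ ⟨le_rfl, hle (j+1)⟩))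
  choose B hBmem hBsubN hBgood using fun k => exists_good hS (p (t k)) (hNnhds k)
  have hBA : ∀ k, B k ⊆ A k := by
    intro k
    match k with
    | 0 => exact hBsubN 0
    | (j+1) => exact (hBsubN (j+1)).trans inter_subset_right
  have hBA' : ∀ j, B (j + 1) ⊆ A j := fun j => (hBsubN (j+1)).trans inter_subset_left
  -- endpoint identifications
  have h1 : t m₀ = 1 := htop m₀ le_rfl
  have hpt0 : p (t 0) = y := by rw [ht0]; exact p.source
  have hptm : p (t m₀) = y := by rw [h1]; exact p.target
  -- the neighborhood
  set V : Set (Path y y) :=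
    {q | (∀ k < m₀, ∀ s ∈ Icc (t k) (t (k + 1)), q s ∈ A k) ∧ ∀ k < m₀, q (t k) ∈ B k} with hV
  have hIccCompact : ∀ k, IsCompact (Icc (t k) (t (k + 1))) := by
    intro k
    have hcl : IsClosed (Icc (t k) (t (k + 1))) := by
      have : Icc (t k) (t (k + 1)) =
          (Subtype.val : I → ℝ) ⁻¹' Icc ((t k : ℝ)) ((t (k+1) : ℝ)) := by
        ext u; simp [mem_Icc, Subtype.coe_le_coe]
      rw [this]
      exact isClosed_Icc.preimage continuous_subtype_val
    exact hcl.isCompact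
  have hV1open : ∀ k, IsOpen {q : Path y y | ∀ s ∈ Icc (t k) (t (k + 1)), q s ∈ A k} := by
    intro k
    have ho : IsOpen {f : C(I, Y) | MapsTo f (Icc (t k) (t (k + 1))) (A k)} :=
      ContinuousMap.isOpen_setOf_mapsTo (hIccCompact k) (hAgood k).1
    have hc : Continuous ((↑) : Path y y → C(I, Y)) := continuous_induced_dom
    exact ho.preimage hc
  have hV2open : ∀ k, IsOpen {q : Path y y | q (t k) ∈ B k} := fun k =>
    (hBgood k).1.preimage (continuous_eval_const (t k))
  have hVopen : IsOpen V := by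
    have hVeq : V = (⋂ k ∈ Finset.range m₀, {q : Path y y | ∀ s ∈ Icc (t k) (t (k + 1)), q s ∈ A k})
        ∩ (⋂ k ∈ Finset.range m₀, {q : Path y y | q (t k) ∈ B k}) := by
      ext q
      simp only [hV, mem_setOf_eq, mem_inter_iff, mem_iInter, Finset.mem_range]
    rw [hVeq]
    exact (isOpen_biInter_finset fun k _ => hV1open k).inter
      (isOpen_biInter_finset fun k _ => hV2open k)
  have hpV : p ∈ V := ⟨fun k _ s hs => hpA k s hs, fun k _ => hBmem k⟩
  refine mem_of_superset (hVopen.mem_nhds hpV) ?_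
  -- the main claim: everything in V is homotopic to p
  rintro q ⟨hq1, hq2⟩
  have hqt0 : q (t 0) = y := by rw [ht0]; exact q.source
  have hqtm : q (t m₀) = y := by rw [h1]; exact q.target
  have hqB : ∀ k, k ≤ m₀ → q (t k) ∈ B k := by
    intro k hk
    rcases lt_or_eq_of_le hk with hk' | rfl
    · exact hq2 k hk'
    · rw [hqtm, ← hptm]; exact hBmem k
  -- connecting paths
  have hbex : ∀ k, ∃ bk : Path (p (t k)) (q (t k)), k ≤ m₀ → ∀ s, bk s ∈ B k := by
    intro k
    by_cases hk : k ≤ m₀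
    · obtain ⟨bk, hbk⟩ := (hBgood k).2.1.joinedIn _ (hBmem k) _ (hqB k hk)
      exact ⟨bk, fun _ => hbk⟩
    · push_neg at hk
      have h1k : t k = 1 := htop k hk.le
      refine ⟨(Path.refl y).cast ?_ ?_, fun h => absurd h (not_le_of_gt hk)⟩
      · rw [h1k]; exact p.target
      · rw [h1k]; exact q.target
  choose b hbmem using hbex
  -- the inductive claim
  have main : ∀ k, k ≤ m₀ → (segY q (t k)).Homotopic ((segY p (t k)).trans (b k)) := by
    intro k
    induction k with
    | zero =>
      intro _
      refine Path.Homotopic.symm (homotopic_of_symm_trans ?_)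
      refine (hBgood 0).2.2 _ _ ?_
      have hyB0 : y ∈ B 0 := hpt0 ▸ hBmem 0
      have hq0 : ∀ w : I, w ≤ t 0 → q w ∈ B 0 := by
        intro w hw
        have hw0 : w = 0 := le_antisymm (ht0 ▸ hw) (zero_le' w)
        rw [hw0, q.source]; exact hyB0
      have hp0 : ∀ w : I, w ≤ t 0 → p w ∈ B 0 := by
        intro w hw
        have hw0 : w = 0 := le_antisymm (ht0 ▸ hw) (zero_le' w)
        rw [hw0, p.source]; exact hyB0
      exact trans_mem (symm_mem (segY_mem q (t 0) hq0))
        (trans_mem (segY_mem p (t 0) hp0) (hbmem 0 (Nat.zero_le _)))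
    | succ j ih =>
      intro hj1
      have hjm : j < m₀ := Nat.lt_of_succ_le hj1
      have hj : j ≤ m₀ := le_of_lt hjm
      have ihh := ih hj
      have hstep : (seg q (t j) (t (j + 1)) (hle j)).Homotopic
          ((b j).symm.trans ((seg p (t j) (t (j + 1)) (hle j)).trans (b (j + 1)))) := by
        refine Path.Homotopic.symm (homotopic_of_symm_trans ?_)
        refine (hAgood j).2.2 _ _ ?_
        refine trans_mem (symm_mem (seg_mem q _ _ _ fun w hw1 hw2 => hq1 j hjm w ⟨hw1, hw2⟩)) ?_
        refine trans_mem (symm_mem fun s => hBA j (hbmem j hj s)) ?_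
        exact trans_mem (seg_mem p _ _ _ fun w hw1 hw2 => hpA j w ⟨hw1, hw2⟩)
          (fun s => hBA' j (hbmem (j + 1) hj1 s))
      have c1 : (segY q (t (j + 1))).Homotopic
          ((segY q (t j)).trans (seg q (t j) (t (j + 1)) (hle j))) := (segY_trans q (hle j)).symm
      have h2 := Path.Homotopic.hcomp ihh hstep
      refine (c1.trans h2).trans ?_
      refine (hassoc _ _ _).trans ?_
      refine (Path.Homotopic.hcomp (Path.Homotopic.refl (segY p (t j)))
        (((hassoc _ _ _).symm.trans (Path.Homotopic.hcomp (htrans_symm (b j))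
          (Path.Homotopic.refl _))).trans (hrefl_trans _))).trans ?_
      refine (hassoc _ _ _).symm.trans ?_
      exact Path.Homotopic.hcomp (segY_trans p (hle j)) (Path.Homotopic.refl (b (j + 1)))
  have hm := main m₀ le_rfl
  -- final step at the endpoint
  have hy1 : q 1 = p 1 := q.target.trans p.target.symm
  have hfin : (seg q (t m₀) 1 (le_one' _)).Homotopic
      ((b m₀).symm.trans ((seg p (t m₀) 1 (le_one' _)).cast rfl hy1)) := by
    refine Path.Homotopic.symm (homotopic_of_symm_trans ?_)
    refine (hBgood m₀).2.2 _ _ ?_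
    have hyBm : y ∈ B m₀ := hptm ▸ hBmem m₀
    have hqm : ∀ w : I, t m₀ ≤ w → q w ∈ B m₀ := by
      intro w hw
      have hw1 : w = 1 := le_antisymm (le_one' w) (h1 ▸ hw)
      rw [hw1, q.target]; exact hyBm
    have hpm : ∀ w : I, t m₀ ≤ w → p w ∈ B m₀ := by
      intro w hw
      have hw1 : w = 1 := le_antisymm (le_one' w) (h1 ▸ hw)
      rw [hw1, p.target]; exact hyBm
    refine trans_mem (symm_mem (seg_mem q _ _ _ fun w hw1 _ => hqm w hw1)) ?_
    refine trans_mem (symm_mem fun s => hbmem m₀ le_rfl s) ?_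
    exact cast_mem _ _ (seg_mem p _ _ _ fun w hw1 _ => hpm w hw1)
  -- assemble everything
  have A1 : (q.cast rfl q.target).Homotopic
      ((segY q (t m₀)).trans (seg q (t m₀) 1 (le_one' _))) := by
    rw [← segY_one q]
    exact (segY_trans q (le_one' _)).symm
  have A2 := Path.Homotopic.hcomp hm hfin
  have A3 : (((segY p (t m₀)).trans (b m₀)).trans
        ((b m₀).symm.trans ((seg p (t m₀) 1 (le_one' _)).cast rfl hy1))).Homotopic
      ((segY p (t m₀)).trans ((seg p (t m₀) 1 (le_one' _)).cast rfl hy1)) := by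
    refine (hassoc _ _ _).trans ?_
    exact Path.Homotopic.hcomp (Path.Homotopic.refl (segY p (t m₀)))
      (((hassoc _ _ _).symm.trans (Path.Homotopic.hcomp (htrans_symm (b m₀))
        (Path.Homotopic.refl _))).trans (hrefl_trans _))
  have A4 : (segY p (t m₀)).trans ((seg p (t m₀) 1 (le_one' _)).cast rfl hy1) =
      ((segY p (t m₀)).trans (seg p (t m₀) 1 (le_one' _))).cast rfl hy1 := rfl
  have A5' := segY_trans p (le_one' (t m₀))
  rw [segY_one p] at A5'
  have A5 : (((segY p (t m₀)).trans (seg p (t m₀) 1 (le_one' _))).cast rfl hy1).Homotopic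
      ((p.cast rfl p.target).cast rfl hy1) := homotopic_cast A5' rfl hy1
  have hfinal : (q.cast rfl q.target).Homotopic ((p.cast rfl p.target).cast rfl hy1) :=
    ((A1.trans A2).trans A3).trans (A4 ▸ A5)
  have hlast := homotopic_cast hfinal rfl q.target.symm
  have e1 : (q.cast rfl q.target).cast rfl q.target.symm = q := by ext s; rfl
  have e2 : ((p.cast rfl p.target).cast rfl hy1).cast rfl q.target.symm = p := by ext s; rfl
  rw [e1, e2] at hlast
  exact hlast

/-- the homotopy class of a loop is open in the loop space. -/
lemma isOpen_homotopic_class [LocallyPathConnectedSpace Y] (hS : SemilocallySimplyConnectedSpace Y)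
    (y : Y) (p : Path y y) : IsOpen {q : Path y y | q.Homotopic p} := by
  rw [isOpen_iff_mem_nhds]
  intro q hq
  exact mem_of_superset (mem_nhds_homotopic hS y q) (fun r hr => hr.trans hq)

section GenLoopStuff

variable {X : Type*} [TopologicalSpace X] {x : X}

/-- the reindexing map on cubes. -/
noncomputable def cubeMap {M N : Type*} (e : M ≃ N) : C((N → I), (M → I)) :=
  ⟨fun y m => y (e m), by exact continuous_pi fun m => continuous_apply (e m)⟩

noncomputable def genLoopCongrFun {M N : Type*} (e : M ≃ N) (f : Ω^ M X x) : Ω^ N X x :=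
  ⟨f.1.comp (cubeMap e), by
    intro z hz
    obtain ⟨j, hj⟩ := hz
    exact f.2 (fun m => z (e m)) ⟨e.symm j, by simpa using hj⟩⟩

lemma genLoopCongrFun_apply {M N : Type*} (e : M ≃ N) (f : Ω^ M X x) (z : I^N) :
    genLoopCongrFun e f z = f (fun m => z (e m)) := rfl

lemma continuous_genLoopCongrFun {M N : Type*} (e : M ≃ N) :
    Continuous (genLoopCongrFun e : Ω^ M X x → Ω^ N X x) := by
  apply Continuous.subtype_mk
  exact (ContinuousMap.continuous_precomp (cubeMap e)).comp continuous_subtype_val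

/-- Reindexing generalized loops along an equivalence of index types. -/
noncomputable def genLoopCongr {M N : Type*} (e : M ≃ N) : (Ω^ M X x) ≃ₜ (Ω^ N X x) where
  toFun := genLoopCongrFun e
  invFun := genLoopCongrFun e.symm
  left_inv f := by
    ext z
    rw [genLoopCongrFun_apply, genLoopCongrFun_apply]
    exact congrArg f (funext fun m => by rw [Equiv.symm_apply_apply])
  right_inv f := by
    ext z
    rw [genLoopCongrFun_apply, genLoopCongrFun_apply]
    exact congrArg f (funext fun m => by rw [Equiv.apply_symm_apply])
  continuous_toFun := continuous_genLoopCongrFun e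
  continuous_invFun := continuous_genLoopCongrFun e.symm

lemma genLoopCongr_const {M N : Type*} (e : M ≃ N) :
    genLoopCongr e (GenLoop.const : Ω^ M X x) = GenLoop.const := by
  ext z; rfl

/-- `X` is homeomorphic to its `0`-dimensional loop space. -/
noncomputable def genLoopFinZeroHomeo : X ≃ₜ (Ω^ (Fin 0) X x) where
  toFun x' := ⟨ContinuousMap.const _ x', fun z hz => by obtain ⟨i, _⟩ := hz; exact i.elim0⟩
  invFun f := f (fun i => i.elim0)
  left_inv x' := rfl
  right_inv f := by
    ext z
    exact (congrArg f (Subsingleton.elim _ _))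
  continuous_toFun := Continuous.subtype_mk ContinuousMap.continuous_const' _
  continuous_invFun := continuous_eval_const _

end GenLoopStuff

section Transfer

variable {Y Z : Type*} [TopologicalSpace Y] [TopologicalSpace Z]

/-- Homeomorphism of path spaces induced by a homeomorphism of spaces. -/
def pathCongr (h : Y ≃ₜ Z) {a : Y} {c : Z} (hc : h a = c) : Path a a ≃ₜ Path c c where
  toFun p := (p.map h.continuous).cast hc.symm hc.symm
  invFun p := (p.map h.symm.continuous).cast (by rw [← hc, Homeomorph.symm_apply_apply])
    (by rw [← hc, Homeomorph.symm_apply_apply])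
  left_inv p := by ext s; simp
  right_inv p := by ext s; simp
  continuous_toFun := by
    apply continuous_induced_rng.2
    have : (((↑) : Path c c → C(I, Z)) ∘
        fun p : Path a a => (p.map h.continuous).cast hc.symm hc.symm)
        = fun p : Path a a => ((h : C(Y, Z)).comp ((p : C(I, Y)))) := by
      ext p s; rfl
    rw [this]
    exact (ContinuousMap.continuous_postcomp _).comp continuous_induced_dom
  continuous_invFun := by
    apply continuous_induced_rng.2
    have : (((↑) : Path a a → C(I, Y)) ∘
        fun p : Path c c => (p.map h.symm.continuous).cast
          (by rw [← hc, Homeomorph.symm_apply_apply]) (by rw [← hc, Homeomorph.symm_apply_apply]))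
        = fun p : Path c c => ((h.symm : C(Z, Y)).comp ((p : C(I, Z)))) := by
      ext p s; rfl
    rw [this]
    exact (ContinuousMap.continuous_postcomp _).comp continuous_induced_dom

lemma pathCongr_apply (h : Y ≃ₜ Z) {a : Y} {c : Z} (hc : h a = c) (p : Path a a) (s : I) :
    pathCongr h hc p s = h (p s) := rfl

lemma pathCongr_refl (h : Y ≃ₜ Z) {a : Y} {c : Z} (hc : h a = c) :
    pathCongr h hc (Path.refl a) = Path.refl c := by
  ext s; rw [pathCongr_apply]; exact hc

/-- the subtype of continuous maps with fixed endpoints is homeomorphic to the path space. -/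
def subtypePathHomeo (z : Z) : {p : C(I, Z) // p 0 = z ∧ p 1 = z} ≃ₜ Path z z where
  toFun s := { toContinuousMap := s.1, source' := s.2.1, target' := s.2.2 }
  invFun p := ⟨p.toContinuousMap, p.source, p.target⟩
  left_inv s := rfl
  right_inv p := rfl
  continuous_toFun := continuous_induced_rng.2 continuous_subtype_val
  continuous_invFun := Continuous.subtype_mk continuous_induced_dom _

lemma slsc_of_homeo (h : Y ≃ₜ Z) (hZ : SemilocallySimplyConnectedSpace Z) :
    SemilocallySimplyConnectedSpace Y := by
  intro a
  obtain ⟨U, hU, hloop⟩ := hZ (h a)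
  refine ⟨h ⁻¹' U, h.continuous.continuousAt.preimage_mem_nhds hU, ?_⟩
  intro L hL
  have hL' : ∀ s, (L.map h.continuous) s ∈ U := fun s => hL s
  have h1 : (L.map h.continuous).Homotopic (Path.refl (h a)) := hloop _ hL'
  have h2 := h1.map (h.symm : C(Z, Y))
  have e : a = h.symm (h a) := (h.symm_apply_apply a).symm
  have h3 := homotopic_cast h2 e e
  have e1 : ((L.map h.continuous).map (h.symm : C(Z, Y)).continuous).cast e e = L := by
    ext s; simp
  have e2 : ((Path.refl (h a)).map (h.symm : C(Z, Y)).continuous).cast e e = Path.refl a := by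
    ext s; simp
  rwa [e1, e2] at h3

end Transfer


section Iter

/-- the equivalence `Fin k ≃ {j : Fin (k+1) // j ≠ 0}`. -/
def finEquivNeZero (k : ℕ) : Fin k ≃ {j : Fin (k + 1) // j ≠ 0} where
  toFun i := ⟨i.succ, Fin.succ_ne_zero i⟩
  invFun j := (j : Fin (k + 1)).pred j.2
  left_inv i := Fin.pred_succ i
  right_inv j := Subtype.ext (Fin.succ_pred j.1 j.2)

lemma fromLoop_refl_const {X : Type*} [TopologicalSpace X] {x : X} (k : ℕ) :
    (GenLoop.loopHomeo (0 : Fin (k + 1))).symm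
      (Path.refl (GenLoop.const : Ω^ {j : Fin (k + 1) // j ≠ 0} X x)) = GenLoop.const := by
  ext z
  rw [GenLoop.loopHomeo_symm_apply, GenLoop.fromLoop_apply]
  rfl

/-- The iterated loop space is homeomorphic to the space of generalized loops,
preserving base points. -/
lemma iterLoop_homeo (X : Type*) [TopologicalSpace X] (x : X) (n : ℕ) :
    ∃ E : (PointedTopSpace.iterLoop (.mk X x) n).carrier ≃ₜ (Ω^ (Fin n) X x),
      E (PointedTopSpace.iterLoop (.mk X x) n).pt = GenLoop.const := by
  induction n with
  | zero => exact ⟨genLoopFinZeroHomeo, rfl⟩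
  | succ k ih =>
    obtain ⟨E, hE⟩ := ih
    have hc : genLoopCongr (finEquivNeZero k)
        (GenLoop.const : Ω^ (Fin k) X x) = GenLoop.const := genLoopCongr_const _
    refine ⟨(subtypePathHomeo _).trans ((pathCongr E hE).trans
      ((pathCongr (genLoopCongr (finEquivNeZero k)) hc).trans
        (GenLoop.loopHomeo (0 : Fin (k + 1))).symm)), ?_⟩
    have h1 : (subtypePathHomeo (PointedTopSpace.iterLoop (.mk X x) k).pt)
        (PointedTopSpace.iterLoop (.mk X x) (k + 1)).pt
        = Path.refl (PointedTopSpace.iterLoop (.mk X x) k).pt := by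
      ext s; rfl
    show (GenLoop.loopHomeo (0 : Fin (k + 1))).symm
      ((pathCongr (genLoopCongr (finEquivNeZero k)) hc)
        ((pathCongr E hE) ((subtypePathHomeo _) _))) = _
    rw [h1, pathCongr_refl, pathCongr_refl]
    exact fromLoop_refl_const k

end Iter

end SLSCAux

open SLSCAux in
/-- If the n-fold based loop space Ω^n(X, x) is path connected, locally path connected
and semilocally simply connected, then π_{n+1}^top(X, x) is discrete. -/
theorem discrete_of_loopSpace_nice (X : Type*) [MetricSpace X] (x : X) (n : ℕ)
    (h1 : PathConnectedSpace (PointedTopSpace.iterLoop (.mk X x) n).carrier)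
    (h2 : LocPathConnectedSpace (PointedTopSpace.iterLoop (.mk X x) n).carrier)
    (h3 : SemilocallySimplyConnectedSpace (PointedTopSpace.iterLoop (.mk X x) n).carrier) :
    DiscreteTopology (HomotopyGroup (Fin (n + 1)) X x) := by
  obtain ⟨E, hE⟩ := iterLoop_homeo X x n
  haveI : LocallyPathConnectedSpace (PointedTopSpace.iterLoop (.mk X x) n).carrier := h2
  haveI : LocallyPathConnectedSpace (Ω^ (Fin n) X x) :=
    E.symm.isOpenEmbedding.locPathConnectedSpace
  have hS : SemilocallySimplyConnectedSpace (Ω^ (Fin n) X x) := slsc_of_homeo E.symm h3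
  haveI : LocallyPathConnectedSpace (Ω^ {j : Fin (n + 1) // j ≠ 0} X x) :=
    (genLoopCongr (finEquivNeZero n)).symm.isOpenEmbedding.locPathConnectedSpace
  have hS2 : SemilocallySimplyConnectedSpace (Ω^ {j : Fin (n + 1) // j ≠ 0} X x) :=
    slsc_of_homeo (genLoopCongr (finEquivNeZero n)).symm hS
  refine discreteTopology_iff_isOpen_singleton.mpr (fun a => ?_)
  obtain ⟨p, rfl⟩ := Quotient.exists_rep a
  refine isQuotientMap_quotient_mk'.isOpen_preimage.mp ?_
  have hset : Quotient.mk' ⁻¹' {(⟦p⟧ : HomotopyGroup (Fin (n + 1)) X x)}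
      = (GenLoop.toLoop (0 : Fin (n + 1))) ⁻¹'
        {r : Path (GenLoop.const : Ω^ {j : Fin (n + 1) // j ≠ 0} X x) GenLoop.const |
          r.Homotopic (GenLoop.toLoop (0 : Fin (n + 1)) p)} := by
    ext q
    simp only [mem_preimage, mem_singleton_iff, mem_setOf_eq]
    rw [show (Quotient.mk' q : HomotopyGroup (Fin (n + 1)) X x) = ⟦q⟧ from rfl, Quotient.eq]
    exact ⟨fun h => GenLoop.homotopicTo _ h, fun h => GenLoop.homotopicFrom _ h⟩
  refine (congrArg IsOpen hset).mpr ?_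
  exact (isOpen_homotopic_class hS2 _ _).preimage (GenLoop.continuous_toLoop _)
end
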